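/- Let Γ be a countably infinite group satisfying the descending chain condition, let E be an equivalence relation on a standard Borel space with at least two equivalence classes, and let λ be a countable limit ordinal. Then J^λ_Γ(E) is Borel bireducible with the countable product ∏_{α<λ} J^α_Γ(E) (the equivalence relation on the product of the domains of the J^α_Γ(E) for α < λ, given by coordinatewise equivalence). -/

import Mathlib

/-- The Γ-jump of an equivalence relation `E` on `X`. -/
def GammaJump (Γ : Type*) [Group Γ] {X : Type*} (E : X → X → Prop) :
    (Γ → X) → (Γ → X) → Prop :=
  fun x y => ∃ γ : Γ, ∀ α : Γ, E (x (γ⁻¹ * α)) (y α)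

/-- A (Borel) equivalence relation: a carrier with a σ-algebra and a binary relation. -/
structure BorelEqvRel : Type 2 where
  carrier : Type 1
  ms : MeasurableSpace carrier
  rel : carrier → carrier → Prop

/-- Borel reducibility between packaged equivalence relations. -/
def RedB (E F : BorelEqvRel) : Prop :=
  ∃ f : E.carrier → F.carrier, @Measurable _ _ E.ms F.ms f ∧
    ∀ x y, E.rel x y ↔ F.rel (f x) (f y)

/-- The Γ-jump of a packaged equivalence relation. -/
def jumpB (Γ : Type) [Group Γ] (R : BorelEqvRel) : BorelEqvRel where
  carrier := Γ → R.carrier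
  ms := @MeasurableSpace.pi _ _ (fun _ => R.ms)
  rel := GammaJump Γ R.rel

/-- The direct sum of a family of packaged equivalence relations. -/
def sumB {ι : Type 1} (f : ι → BorelEqvRel) : BorelEqvRel where
  carrier := Σ i : ι, (f i).carrier
  ms := letI := fun i => (f i).ms; inferInstance
  rel a b := ∃ (i : ι) (x y : (f i).carrier), (f i).rel x y ∧ a = ⟨i, x⟩ ∧ b = ⟨i, y⟩

/-- The product of a family of packaged equivalence relations: coordinatewise
equivalence on the product of the domains. -/
def prodB {ι : Type 1} (f : ι → BorelEqvRel) : BorelEqvRel where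
  carrier := ∀ i : ι, (f i).carrier
  ms := @MeasurableSpace.pi _ _ (fun i => (f i).ms)
  rel x y := ∀ i : ι, (f i).rel (x i) (y i)

/-- The iterated Γ-jumps of `E`: `J^0 = E`, `J^{α+1} = (J^α)^{[Γ]}`, and
`J^λ = (⊕_{α<λ} J^α)^{[Γ]}` for limit `λ`. -/
noncomputable def iterJump (Γ : Type) [Group Γ] (E : BorelEqvRel) (o : Ordinal) :
    BorelEqvRel :=
  Ordinal.limitRecOn o E (fun _ ih => jumpB Γ ih)
    (fun o _ ih => jumpB Γ (sumB (fun i : {β : Ordinal // β < o} => ih i.1 i.2)))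

/-!
`J^λ = (⊕_{β<λ} J^β)^{[Γ]}`. Truncating the sum to the levels `β < δ`, with everything from level
`δ` on collapsed onto one point of `J^δ`, gives a relation that embeds into `J^{δ+1}`, so the jump
of the truncation embeds into `J^{δ+2}`; sending `x` to the family of jumps of its truncations
reduces `J^λ` to the product. The family determines the class of `x`: the stabilizers of the
truncations of `x` form a decreasing chain of subgroups, which stabilizes by the descending chain
condition, and past that point one shift witnesses the equivalence at every level.

Conversely, since `λ` is countable and `Γ` infinite, a point of the product can be laid out along
an injection `λ → Γ` as a single sequence in `(⊕_{β<λ} J^β)^Γ`, each entry tagged by its level; the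
tags rule out every shift but the identity.
-/

section MeasurableSigma

variable {α : Type*} {β : α → Type*} [∀ a, MeasurableSpace (β a)] {γ : Type*}
  [MeasurableSpace γ]

theorem measurable_sigmaMk (a : α) : Measurable (Sigma.mk (β := β) a) := fun _ hs =>
  MeasurableSpace.map_def.mp (MeasurableSpace.measurableSet_iInf.mp hs a)

theorem measurable_sigma_iff {g : Sigma β → γ} :
    Measurable g ↔ ∀ a, Measurable fun x => g ⟨a, x⟩ :=
  ⟨fun hg a => hg.comp (measurable_sigmaMk a), fun hg _ hs =>
    MeasurableSpace.measurableSet_iInf.mpr fun a => MeasurableSpace.map_def.mpr (hg a hs)⟩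

end MeasurableSigma

section JumpWitness

variable {Γ : Type*} [Group Γ] {X : Type*} {R : X → X → Prop}

def JumpWitness (R : X → X → Prop) (γ : Γ) (u v : Γ → X) : Prop :=
  ∀ α, R (u (γ⁻¹ * α)) (v α)

namespace JumpWitness

variable {γ δ : Γ} {u v w : Γ → X}

theorem one (hR : Equivalence R) (u : Γ → X) : JumpWitness R (1 : Γ) u u := fun α => by
  simpa using hR.refl (u α)

theorem inv (hR : Equivalence R) (h : JumpWitness R γ u v) : JumpWitness R γ⁻¹ v u :=
  fun α => by simpa using hR.symm (h (γ * α))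

theorem mul (hR : Equivalence R) (h₁ : JumpWitness R γ u v) (h₂ : JumpWitness R δ v w) :
    JumpWitness R (δ * γ) u w := fun α => by
  simpa [mul_assoc] using hR.trans (h₁ (δ⁻¹ * α)) (h₂ α)

end JumpWitness

theorem equivalence_gammaJump (hR : Equivalence R) : Equivalence (GammaJump Γ R) where
  refl u := ⟨1, JumpWitness.one hR u⟩
  symm := fun ⟨γ, h⟩ => ⟨γ⁻¹, JumpWitness.inv hR h⟩
  trans := fun ⟨γ, h₁⟩ ⟨δ, h₂⟩ => ⟨δ * γ, JumpWitness.mul hR h₁ h₂⟩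

def jumpStabilizer (hR : Equivalence R) (u : Γ → X) : Subgroup Γ where
  carrier := {γ | JumpWitness R γ u u}
  one_mem' := JumpWitness.one hR u
  mul_mem' ha hb := JumpWitness.mul hR hb ha
  inv_mem' h := JumpWitness.inv hR h

theorem gammaJump_const_right_iff {u : Γ → X} {c : X} :
    GammaJump Γ R u (fun _ => c) ↔ ∀ α, R (u α) c :=
  ⟨fun ⟨γ, h⟩ α => by simpa using h (γ * α), fun h => ⟨1, fun α => h _⟩⟩

theorem gammaJump_const_left_iff {u : Γ → X} {c : X} :
    GammaJump Γ R (fun _ => c) u ↔ ∀ α, R c (u α) :=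
  ⟨fun ⟨_, h⟩ => h, fun h => ⟨1, h⟩⟩

theorem gammaJump_const_const_iff {c c' : X} :
    GammaJump Γ R (fun _ => c) (fun _ => c') ↔ R c c' :=
  gammaJump_const_left_iff.trans ⟨fun h => h 1, fun h _ => h⟩

end JumpWitness

section DescendingChain

theorem exists_forall_ge_eq_of_antitone {D α : Type*} [Preorder D] [Nonempty D]
    [PartialOrder α] [WellFoundedLT α] {T : D → α} (hT : Antitone T) :
    ∃ d₀, ∀ d, d₀ ≤ d → T d = T d₀ := by
  obtain ⟨_, ⟨d₀, rfl⟩, hmin⟩ := wellFounded_lt.has_min (Set.range T) (Set.range_nonempty T)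
  exact ⟨d₀, fun d hd => (hT hd).eq_of_not_lt (hmin _ ⟨d, rfl⟩)⟩

variable {Γ : Type*} [Group Γ] [WellFoundedLT (Subgroup Γ)] {X : Type*} {R : X → X → Prop}

/-- Past a stage `d₀` from which on the stabilizers of `c d ∘ x` are all equal, any two witnesses
differ by an element of the common stabilizer, so a witness at `d₀` works at every stage. -/
theorem gammaJump_of_forall_gammaJump {D : Type*} [Preorder D] [IsDirected D (· ≤ ·)]
    [Nonempty D] {Y : D → Type*} {S : ∀ d, Y d → Y d → Prop} (hS : ∀ d, Equivalence (S d))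
    {c : ∀ d, X → Y d}
    (hmono : ∀ ⦃d d'⦄, d ≤ d' → ∀ u v, S d' (c d' u) (c d' v) → S d (c d u) (c d v))
    (hsep : ∀ u v, ∃ d, S d (c d u) (c d v) → R u v) {x y : Γ → X}
    (h : ∀ d, GammaJump Γ (S d) (c d ∘ x) (c d ∘ y)) : GammaJump Γ R x y := by
  have hanti : Antitone fun d => jumpStabilizer (hS d) (c d ∘ x) :=
    fun d d' hdd' _ hγ α => hmono hdd' _ _ (hγ α)
  obtain ⟨d₀, hd₀⟩ := exists_forall_ge_eq_of_antitone hanti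
  obtain ⟨γ₀, hγ₀⟩ := h d₀
  have hstage : ∀ d, JumpWitness (S d) γ₀ (c d ∘ x) (c d ∘ y) := by
    intro d
    obtain ⟨d', hdd', hd₀d'⟩ := directed_of (· ≤ ·) d d₀
    obtain ⟨γ, hγ⟩ := h d'
    have hγ₀' : JumpWitness (S d₀) γ (c d₀ ∘ x) (c d₀ ∘ y) := fun α => hmono hd₀d' _ _ (hγ α)
    have hmem : γ⁻¹ * γ₀ ∈ jumpStabilizer (hS d') (c d' ∘ x) := by
      rw [hd₀ d' hd₀d']
      exact JumpWitness.mul (hS d₀) hγ₀ (JumpWitness.inv (hS d₀) hγ₀')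
    have hγ' : JumpWitness (S d') (γ * (γ⁻¹ * γ₀)) (c d' ∘ x) (c d' ∘ y) :=
      JumpWitness.mul (hS d') hmem hγ
    rw [mul_inv_cancel_left] at hγ'
    exact fun α => hmono hdd' _ _ (hγ' α)
  refine ⟨γ₀, fun α => ?_⟩
  obtain ⟨d, hd⟩ := hsep (x (γ₀⁻¹ * α)) (y α)
  exact hd (hstage d α)

end DescendingChain

section TagPattern

variable {Γ : Type*} [Group Γ] [DecidableEq Γ] {Y : Type*} {R : Y → Y → Prop}

def tagPattern (s : Γ) (a b w : Y) : Γ → Y :=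
  fun γ => if γ = 1 then w else if γ = s then a else b

variable {s : Γ} {a b : Y}

/-- If `γ ≠ 1` shifted the pattern onto another one, the lone `a` at `s` would have to come from
position `1` (everything else carries the inequivalent `b`), forcing `γ = s`; then position `s²`
carries `a` on one side, which is only possible if `s² = 1`, and then it reads `w' ~ a ~ w`. -/
theorem gammaJump_tagPattern_iff (hR : Equivalence R) (hab : ¬ R a b) (hs : s ≠ 1) {w w' : Y} :
    GammaJump Γ R (tagPattern s a b w) (tagPattern s a b w') ↔ R w w' := by
  refine ⟨fun ⟨γ, h⟩ => ?_, fun h => ⟨1, fun α => ?_⟩⟩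
  · by_cases hγ : γ = 1
    · simpa [tagPattern, hγ] using h 1
    have hγs : γ = s := by
      by_contra hγs
      have h1 : γ⁻¹ * s ≠ 1 := fun h1 => hγs (inv_mul_eq_one.mp h1)
      have h2 : γ⁻¹ * s ≠ s := fun h2 => hγ (by simpa using h2)
      have hs' := h s
      simp only [tagPattern, h1, h2, hs, if_false, if_true] at hs'
      exact hab (hR.symm hs')
    subst hγs
    have hw : R w a := by simpa [tagPattern, hs] using h γ
    have hγγ : γ⁻¹ * (γ * γ) = γ := inv_mul_cancel_left γ γ
    have hsq : γ * γ = 1 := by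
      by_contra hsq
      have hne : γ * γ ≠ γ := fun h' => hs (by simpa using h')
      have hss := h (γ * γ)
      simp only [tagPattern, hγγ, hsq, hne, hs, if_false, if_true] at hss
      exact hab hss
    have hwa' := h (γ * γ)
    rw [hγγ, hsq] at hwa'
    exact hR.trans hw (by simpa [tagPattern, hs] using hwa')
  · simp only [tagPattern, inv_one, one_mul]
    split_ifs
    exacts [h, hR.refl a, hR.refl b]

theorem not_gammaJump_tagPattern_const (hR : Equivalence R) (hab : ¬ R a b) (hs : s ≠ 1)
    {t : Γ} (ht : t ≠ 1) (hts : t ≠ s) (w c : Y) :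
    ¬ GammaJump Γ R (tagPattern s a b w) (fun _ => c) := by
  rw [gammaJump_const_right_iff]
  intro h
  have ha := h s
  have hb := h t
  simp only [tagPattern, hs, ht, hts, if_false, if_true] at ha hb
  exact hab (hR.trans ha (hR.symm hb))

theorem not_gammaJump_const_tagPattern (hR : Equivalence R) (hab : ¬ R a b) (hs : s ≠ 1)
    {t : Γ} (ht : t ≠ 1) (hts : t ≠ s) (w c : Y) :
    ¬ GammaJump Γ R (fun _ => c) (tagPattern s a b w) := fun h =>
  not_gammaJump_tagPattern_const hR hab hs ht hts w c ((equivalence_gammaJump hR).symm h)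

theorem measurable_tagPattern [MeasurableSpace Y] (s : Γ) (a b : Y) :
    Measurable (tagPattern s a b) := by
  refine measurable_pi_lambda _ fun γ => ?_
  simp only [tagPattern]
  split_ifs
  exacts [measurable_id, measurable_const, measurable_const]

end TagPattern

section PiExtend

variable {ι κ : Type*} {X : κ → Type*} {e : ι → κ}

open Classical in
noncomputable def piExtend (e : ι → κ) (z : ∀ i, X (e i)) (m : ∀ k, X k) : ∀ k, X k :=
  fun k => if h : ∃ i, e i = k then h.choose_spec ▸ z h.choose else m k

theorem piExtend_apply (he : Function.Injective e) (z : ∀ i, X (e i)) (m : ∀ k, X k) (i : ι) :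
    piExtend e z m (e i) = z i := by
  have hcast : ∀ j (hj : e j = e i), (hj ▸ z j : X (e i)) = z i := by
    intro j hj
    obtain rfl := he hj
    rfl
  exact (dif_pos ⟨i, rfl⟩).trans (hcast _ _)

theorem piExtend_of_forall_ne {k : κ} (hk : ∀ i, e i ≠ k) (z : ∀ i, X (e i)) (m : ∀ k, X k) :
    piExtend e z m k = m k :=
  dif_neg fun ⟨i, hi⟩ => hk i hi

theorem measurable_piExtend [∀ k, MeasurableSpace (X k)] (he : Function.Injective e)
    (m : ∀ k, X k) : Measurable fun z : ∀ i, X (e i) => piExtend e z m := by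
  refine measurable_pi_lambda _ fun k => ?_
  by_cases hk : ∃ i, e i = k
  · obtain ⟨i, rfl⟩ := hk
    simp_rw [piExtend_apply he]
    exact measurable_pi_apply i
  · push Not at hk
    simp_rw [piExtend_of_forall_ne hk]
    exact measurable_const

end PiExtend

section Splice

variable {ι : Type*} {X : ι → Type*} [DecidableEq ι] {Γ : Type*} [Group Γ] [DecidableEq Γ]

def spliceMap (i₀ : ι) (r : (Σ i : {i // i ≠ i₀}, X i) → X i₀) (s : Γ) (a b : X i₀) :
    (Σ i, X i) → Γ → X i₀
  | ⟨i, x⟩ => if h : i = i₀ then tagPattern s a b (h ▸ x) else fun _ => r ⟨⟨i, h⟩, x⟩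

variable {i₀ : ι} {r : (Σ i : {i // i ≠ i₀}, X i) → X i₀} {s : Γ} {a b : X i₀}

@[simp]
theorem spliceMap_self (x : X i₀) : spliceMap i₀ r s a b ⟨i₀, x⟩ = tagPattern s a b x :=
  dif_pos rfl

theorem spliceMap_of_ne {i : ι} (h : i ≠ i₀) (x : X i) :
    spliceMap i₀ r s a b ⟨i, x⟩ = fun _ => r ⟨⟨i, h⟩, x⟩ :=
  dif_neg h

end Splice

section Spread

variable {ι : Type*} {X : ι → Type*} {Γ : Type*} {e : ι → Γ}

noncomputable def sigmaSpread (e : ι → Γ) (d : Σ i, X i) (z : ∀ i, X i) (α : Γ) : Σ i, X i :=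
  (Function.partialInv e α).elim d fun i => ⟨i, z i⟩

theorem sigmaSpread_apply (he : Function.Injective e) (d : Σ i, X i) (z : ∀ i, X i) (i : ι) :
    sigmaSpread e d z (e i) = ⟨i, z i⟩ := by
  simp [sigmaSpread, Function.partialInv_left he]

end Spread

attribute [local instance] BorelEqvRel.ms

section BorelEqvRel

theorem RedB.trans {A B C : BorelEqvRel} (h₁ : RedB A B) (h₂ : RedB B C) : RedB A C := by
  obtain ⟨f, hf, hfr⟩ := h₁
  obtain ⟨g, hg, hgr⟩ := h₂
  exact ⟨g ∘ f, hg.comp hf, fun x y => (hfr x y).trans (hgr _ _)⟩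

variable {Γ : Type} [Group Γ]

theorem redB_jumpB {A B : BorelEqvRel} (h : RedB A B) : RedB (jumpB Γ A) (jumpB Γ B) := by
  obtain ⟨f, hf, hfr⟩ := h
  exact ⟨fun u γ => f (u γ), measurable_pi_lambda _ fun γ => hf.comp (measurable_pi_apply γ),
    fun u v => exists_congr fun γ => forall_congr' fun α => hfr _ _⟩

theorem redB_jumpB_self (A : BorelEqvRel) : RedB A (jumpB Γ A) :=
  ⟨fun x _ => x, measurable_pi_lambda _ fun _ => measurable_id,
    fun _ _ => gammaJump_const_const_iff.symm⟩

variable {ι κ : Type 1} {f : ι → BorelEqvRel}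

theorem sumB_rel_mk_iff {i : ι} {x y : (f i).carrier} :
    (sumB f).rel ⟨i, x⟩ ⟨i, y⟩ ↔ (f i).rel x y := by
  refine ⟨fun ⟨j, x', y', h, hx, hy⟩ => ?_, fun h => ⟨i, x, y, h, rfl, rfl⟩⟩
  cases hx
  cases hy
  exact h

theorem fst_eq_of_sumB_rel {u v : (sumB f).carrier} (h : (sumB f).rel u v) : u.1 = v.1 := by
  obtain ⟨i, x, y, -, rfl, rfl⟩ := h
  rfl

theorem equivalence_sumB (hf : ∀ i, Equivalence (f i).rel) : Equivalence (sumB f).rel where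
  refl u := sumB_rel_mk_iff.mpr ((hf u.1).refl u.2)
  symm := fun ⟨i, _, _, h, hu, hv⟩ => ⟨i, _, _, (hf i).symm h, hv, hu⟩
  trans := by
    rintro _ _ _ ⟨i, x, y, hxy, rfl, rfl⟩ h
    obtain ⟨j, y', z, hyz, hy, rfl⟩ := h
    cases hy
    exact ⟨i, x, z, (hf i).trans hxy hyz, rfl, rfl⟩

theorem sumB_comp_rel_mk_iff (g : κ → BorelEqvRel) {e : ι → κ} (he : Function.Injective e)
    {i j : ι} {x : (g (e i)).carrier} {y : (g (e j)).carrier} :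
    (sumB (g ∘ e)).rel ⟨i, x⟩ ⟨j, y⟩ ↔ (sumB g).rel ⟨e i, x⟩ ⟨e j, y⟩ := by
  by_cases hij : i = j
  · subst hij
    exact (sumB_rel_mk_iff (f := g ∘ e)).trans (sumB_rel_mk_iff (f := g)).symm
  · exact iff_of_false (fun h => hij (fst_eq_of_sumB_rel h))
      (fun h => hij (he (fst_eq_of_sumB_rel h)))

theorem redB_sumB_comp (g : κ → BorelEqvRel) {e : ι → κ} (he : Function.Injective e) :
    RedB (sumB (g ∘ e)) (sumB g) :=
  ⟨fun z => ⟨e z.1, z.2⟩, measurable_sigma_iff.mpr fun i => measurable_sigmaMk (e i),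
    fun ⟨_, _⟩ ⟨_, _⟩ => sumB_comp_rel_mk_iff g he⟩

theorem redB_prodB_comp (g : κ → BorelEqvRel) {e : ι → κ} (he : Function.Injective e)
    (m : ∀ k, (g k).carrier) (hm : ∀ k, (g k).rel (m k) (m k)) :
    RedB (prodB (g ∘ e)) (prodB g) := by
  refine ⟨fun (z : ∀ i, (g (e i)).carrier) => piExtend e z m, measurable_piExtend he m,
    fun (z w : ∀ i, (g (e i)).carrier) => ⟨fun h k => ?_, fun h i => ?_⟩⟩
  · by_cases hk : ∃ i, e i = k
    · obtain ⟨i, rfl⟩ := hk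
      dsimp only
      rw [piExtend_apply he, piExtend_apply he]
      exact h i
    · push Not at hk
      dsimp only
      rw [piExtend_of_forall_ne hk, piExtend_of_forall_ne hk]
      exact hm k
  · have hi := h (e i)
    dsimp only at hi
    rwa [piExtend_apply he, piExtend_apply he] at hi

/-- Constant sequences are never shift-equivalent to the non-constant `tagPattern`s, so the image
of `f i₀` stays apart from that of the other summands. -/
theorem redB_sumB_jumpB {s t : Γ} (hs : s ≠ 1) (ht : t ≠ 1) (hts : t ≠ s)
    (f : ι → BorelEqvRel) (i₀ : ι) (hf : Equivalence (f i₀).rel)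
    (htwo : ∃ a b, ¬ (f i₀).rel a b) (hrest : RedB (sumB fun i : {i // i ≠ i₀} => f i) (f i₀)) :
    RedB (sumB f) (jumpB Γ (f i₀)) := by
  classical
  obtain ⟨a, b, hab⟩ := htwo
  obtain ⟨r, hr, hrr⟩ := hrest
  change (Σ i : {i // i ≠ i₀}, (f i).carrier) → (f i₀).carrier at r
  refine ⟨spliceMap i₀ r s a b, measurable_sigma_iff.mpr fun i => ?_,
    fun (u v : Σ i, (f i).carrier) => ?_⟩
  · by_cases h : i = i₀
    · subst h
      simp only [spliceMap_self]
      exact measurable_tagPattern s a b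
    · simp only [spliceMap_of_ne h]
      exact measurable_pi_lambda _ fun _ => hr.comp (measurable_sigmaMk _)
  show _ ↔ GammaJump Γ (f i₀).rel _ _
  obtain ⟨i, x⟩ := u
  obtain ⟨j, y⟩ := v
  by_cases hi : i = i₀ <;> by_cases hj : j = i₀
  · subst hi hj
    simpa only [spliceMap_self, sumB_rel_mk_iff] using (gammaJump_tagPattern_iff hf hab hs).symm
  · subst hi
    simp only [spliceMap_self, spliceMap_of_ne hj]
    exact iff_of_false (fun h => hj (fst_eq_of_sumB_rel h).symm)
      (not_gammaJump_tagPattern_const hf hab hs ht hts _ _)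
  · subst hj
    simp only [spliceMap_self, spliceMap_of_ne hi]
    exact iff_of_false (fun h => hi (fst_eq_of_sumB_rel h))
      (not_gammaJump_const_tagPattern hf hab hs ht hts _ _)
  · simp only [spliceMap_of_ne hi, spliceMap_of_ne hj, gammaJump_const_const_iff]
    exact (sumB_comp_rel_mk_iff f Subtype.val_injective (i := ⟨i, hi⟩) (j := ⟨j, hj⟩)).symm.trans
      (hrr _ _)

/-- A shift relating two spread-out sequences must map `e i₁`, the only position labelled `i₁`,
to itself, so it is the identity. -/
theorem redB_prodB_jumpB_sumB (f : ι → BorelEqvRel) {e : ι → Γ} (he : Function.Injective e)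
    {i₀ i₁ : ι} (h01 : i₀ ≠ i₁) (m : (f i₀).carrier) (hm : (f i₀).rel m m) :
    RedB (prodB f) (jumpB Γ (sumB f)) := by
  refine ⟨fun (z : ∀ i, (f i).carrier) => sigmaSpread e ⟨i₀, m⟩ z, ?_,
    fun (z w : ∀ i, (f i).carrier) => ?_⟩
  · refine measurable_pi_lambda _ fun α => ?_
    cases hα : Function.partialInv e α with
    | none =>
      simp only [sigmaSpread, hα, Option.elim]
      exact measurable_const
    | some i =>
      simp only [sigmaSpread, hα, Option.elim]
      exact (measurable_sigmaMk i).comp (measurable_pi_apply i)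
  show (∀ i, (f i).rel (z i) (w i)) ↔
    GammaJump Γ (sumB f).rel (sigmaSpread e ⟨i₀, m⟩ z) (sigmaSpread e ⟨i₀, m⟩ w)
  refine ⟨fun h => ⟨1, fun α => ?_⟩, fun ⟨γ, hγ⟩ i => ?_⟩
  · rw [inv_one, one_mul]
    cases hα : Function.partialInv e α with
    | none =>
      simp only [sigmaSpread, hα, Option.elim]
      exact sumB_rel_mk_iff.mpr hm
    | some i =>
      simp only [sigmaSpread, hα, Option.elim]
      exact sumB_rel_mk_iff.mpr (h i)
  have hγ1 : γ = 1 := by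
    have h1 := fst_eq_of_sumB_rel (hγ (e i₁))
    rw [sigmaSpread_apply he] at h1
    cases hα : Function.partialInv e (γ⁻¹ * e i₁) with
    | none =>
      simp only [sigmaSpread, hα, Option.elim] at h1
      exact absurd h1 h01
    | some j =>
      simp only [sigmaSpread, hα, Option.elim] at h1
      subst h1
      have hfix := (he.isPartialInv _ _).mp hα
      simpa using hfix
  subst hγ1
  simpa [sigmaSpread_apply he, sumB_rel_mk_iff] using hγ (e i)

end BorelEqvRel

section Cut

variable {ι : Type 1} [LinearOrder ι] (f : ι → BorelEqvRel)

def sumCut (d : ι) (m : (f d).carrier) (z : Σ i, (f i).carrier) :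
    Σ j : {j // j ≤ d}, (f j).carrier :=
  if h : z.1 < d then ⟨⟨z.1, h.le⟩, z.2⟩ else ⟨⟨d, le_rfl⟩, m⟩

theorem measurable_sumCut (d : ι) (m : (f d).carrier) :
    Measurable (sumCut f d m) := by
  refine measurable_sigma_iff (β := fun i => (f i).carrier) |>.mpr fun i => ?_
  by_cases h : i < d
  · simp only [sumCut, dif_pos h]
    exact measurable_sigmaMk (β := fun j : {j // j ≤ d} => (f j).carrier) ⟨i, h.le⟩
  · simp only [sumCut, dif_neg h]
    exact measurable_const

variable {f}

theorem sumCut_rel_iff {d : ι} {m : (f d).carrier} (hm : (f d).rel m m)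
    {u v : Σ i, (f i).carrier} :
    (sumB fun j : {j // j ≤ d} => f j).rel (sumCut f d m u) (sumCut f d m v) ↔
      (u.1 < d ∨ v.1 < d → (sumB f).rel u v) := by
  obtain ⟨i, x⟩ := u
  obtain ⟨j, y⟩ := v
  by_cases hi : i < d <;> by_cases hj : j < d <;> simp only [sumCut, hi, hj, dif_pos, dif_neg,
    not_false_eq_true, or_true, or_false, true_imp_iff, false_imp_iff, iff_true]
  · exact sumB_comp_rel_mk_iff f Subtype.val_injective
  · refine iff_of_false (fun h => ?_) (fun h => ?_)
    · exact hi.ne (congrArg Subtype.val (fst_eq_of_sumB_rel h))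
    · have hij : i = j := fst_eq_of_sumB_rel h
      exact hj (hij ▸ hi)
  · refine iff_of_false (fun h => ?_) (fun h => ?_)
    · exact hj.ne (congrArg Subtype.val (fst_eq_of_sumB_rel h)).symm
    · have hij : i = j := fst_eq_of_sumB_rel h
      exact hi (hij ▸ hj)
  · exact sumB_rel_mk_iff.mpr hm

variable {Γ : Type} [Group Γ] [WellFoundedLT (Subgroup Γ)] [NoMaxOrder ι] [Nonempty ι]

theorem redB_jumpB_sumB_prodB (hf : ∀ i, Equivalence (f i).rel) (m : ∀ i, (f i).carrier)
    (C : ι → BorelEqvRel) (hC : ∀ d, RedB (jumpB Γ (sumB fun j : {j // j ≤ d} => f j)) (C d)) :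
    RedB (jumpB Γ (sumB f)) (prodB C) := by
  choose g hg hgr using hC
  refine ⟨fun x d => g d (sumCut f d (m d) ∘ x),
    measurable_pi_lambda _ fun d => (hg d).comp (measurable_pi_lambda _ fun γ =>
      (measurable_sumCut f d (m d)).comp (measurable_pi_apply γ)),
    fun x y => ⟨fun ⟨γ, h⟩ d => (hgr d _ _).mp ⟨γ, fun α => (sumCut_rel_iff ((hf d).refl _)).mpr
      fun _ => h α⟩, fun h => ?_⟩⟩
  refine gammaJump_of_forall_gammaJump (fun d => equivalence_sumB fun j => hf j.1) ?_ ?_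
    fun d => (hgr d _ _).mpr (h d)
  · intro d d' hdd' u v h
    exact (sumCut_rel_iff ((hf d).refl _)).mpr fun hlt =>
      (sumCut_rel_iff ((hf d').refl _)).mp h (hlt.imp (·.trans_le hdd') (·.trans_le hdd'))
  · intro u v
    obtain ⟨d, hd⟩ := exists_gt (max u.1 v.1)
    exact ⟨d, fun h => (sumCut_rel_iff ((hf d).refl _)).mp h
      (Or.inl ((le_max_left _ _).trans_lt hd))⟩

end Cut

section IterJump

variable (Γ : Type) [Group Γ] (E : BorelEqvRel)

noncomputable abbrev iterJumpSum (o : Ordinal) : BorelEqvRel :=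
  sumB fun i : {β : Ordinal // β < o} => iterJump Γ E i.1

theorem iterJump_zero : iterJump Γ E 0 = E :=
  Ordinal.limitRecOn_zero _ _ _

theorem iterJump_succ (o : Ordinal) :
    iterJump Γ E (Order.succ o) = jumpB Γ (iterJump Γ E o) := by
  rw [Order.succ_eq_add_one]
  exact Ordinal.limitRecOn_add_one _ _ _ _

theorem iterJump_limit {o : Ordinal} (ho : Order.IsSuccLimit o) :
    iterJump Γ E o = jumpB Γ (iterJumpSum Γ E o) :=
  Ordinal.limitRecOn_limit _ _ _ _ ho

variable {Γ E}

theorem redB_sumB_iterJump_of_lt {ι : Type 1} {v : ι → Ordinal} (hv : Function.Injective v)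
    {o : Ordinal} (hvo : ∀ i, v i < o) :
    RedB (sumB fun i => iterJump Γ E (v i)) (iterJumpSum Γ E o) :=
  redB_sumB_comp (fun i : {β // β < o} => iterJump Γ E i.1) (e := fun i => ⟨v i, hvo i⟩)
    fun _ _ h => hv (Subtype.mk.inj h)

theorem equivalence_iterJump (hE : Equivalence E.rel) (o : Ordinal) :
    Equivalence (iterJump Γ E o).rel := by
  induction o using Ordinal.limitRecOn with
  | zero => rwa [iterJump_zero]
  | add_one o ih =>
    rw [← Order.succ_eq_add_one, iterJump_succ]
    exact equivalence_gammaJump ih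
  | limit o ho ih =>
    rw [iterJump_limit Γ E ho]
    exact equivalence_gammaJump (equivalence_sumB fun i => ih i.1 i.2)

theorem exists_not_rel_iterJump (htwo : ∃ a b, ¬ E.rel a b) (o : Ordinal) :
    ∃ a b, ¬ (iterJump Γ E o).rel a b := by
  induction o using Ordinal.limitRecOn with
  | zero => rwa [iterJump_zero]
  | add_one o ih =>
    rw [← Order.succ_eq_add_one, iterJump_succ]
    obtain ⟨a, b, hab⟩ := ih
    exact ⟨fun _ => a, fun _ => b, fun h => hab (gammaJump_const_const_iff.mp h)⟩
  | limit o ho ih =>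
    rw [iterJump_limit Γ E ho]
    obtain ⟨a, b, hab⟩ := ih 0 ho.pos
    exact ⟨fun _ => ⟨⟨0, ho.pos⟩, a⟩, fun _ => ⟨⟨0, ho.pos⟩, b⟩,
      fun h => hab ((sumB_rel_mk_iff (f := fun i : {β // β < o} => iterJump Γ E i.1)).mp
        ((gammaJump_const_const_iff (R := (iterJumpSum Γ E o).rel)).mp h))⟩

theorem redB_iterJumpSum_iterJump [Infinite Γ] (hE : Equivalence E.rel)
    (htwo : ∃ a b, ¬ E.rel a b) (o : Ordinal) : RedB (iterJumpSum Γ E o) (iterJump Γ E o) := by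
  classical
  obtain ⟨s, hs⟩ := exists_ne (1 : Γ)
  obtain ⟨t, ht⟩ := Infinite.exists_notMem_finset ({1, s} : Finset Γ)
  simp only [Finset.mem_insert, Finset.mem_singleton, not_or] at ht
  induction o using Ordinal.limitRecOn with
  | zero =>
    have : IsEmpty (iterJumpSum Γ E 0).carrier := ⟨fun z => not_lt_zero z.1.2⟩
    exact ⟨isEmptyElim, measurable_of_empty _, isEmptyElim⟩
  | add_one δ ih =>
    rw [← Order.succ_eq_add_one, iterJump_succ]
    have hrest : RedB (sumB fun i : {i : {β // β < Order.succ δ} // i ≠ ⟨δ, Order.lt_succ δ⟩} =>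
        iterJump Γ E i.1.1) (iterJump Γ E δ) :=
      RedB.trans (redB_sumB_iterJump_of_lt (Subtype.val_injective.comp Subtype.val_injective)
        fun i => (Order.lt_succ_iff.mp i.1.2).lt_of_ne fun h => i.2 (Subtype.ext h)) ih
    exact redB_sumB_jumpB hs ht.1 ht.2 (fun i : {β // β < Order.succ δ} => iterJump Γ E i.1)
      ⟨δ, Order.lt_succ δ⟩ (equivalence_iterJump hE δ) (exists_not_rel_iterJump htwo δ) hrest
  | limit o ho _ =>
    rw [iterJump_limit Γ E ho]
    exact redB_jumpB_self _

theorem redB_iterJump_prodB_of_isSuccLimit [Infinite Γ] [WellFoundedLT (Subgroup Γ)]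
    (hE : Equivalence E.rel) (htwo : ∃ a b, ¬ E.rel a b) {lam : Ordinal}
    (hlim : Order.IsSuccLimit lam) :
    RedB (iterJump Γ E lam) (prodB fun i : {β : Ordinal // β < lam} => iterJump Γ E i.1) := by
  have : NoMaxOrder {β : Ordinal // β < lam} :=
    ⟨fun i => ⟨⟨Order.succ i.1, hlim.succ_lt i.2⟩, Order.lt_succ i.1⟩⟩
  have : Nonempty {β : Ordinal // β < lam} := ⟨⟨0, hlim.pos⟩⟩
  have m : ∀ o, (iterJump Γ E o).carrier := fun o => (exists_not_rel_iterJump htwo o).choose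
  let e : {β : Ordinal // β < lam} → {β : Ordinal // β < lam} :=
    fun d => ⟨Order.succ (Order.succ d.1), hlim.succ_lt (hlim.succ_lt d.2)⟩
  have he : Function.Injective e := fun _ _ h =>
    Subtype.ext (Order.succ_injective (Order.succ_injective (congrArg Subtype.val h)))
  rw [iterJump_limit Γ E hlim]
  refine (redB_jumpB_sumB_prodB (Γ := Γ) (fun i => equivalence_iterJump hE i.1) (fun i => m i.1)
    (fun d => iterJump Γ E (e d).1) fun d => ?_).trans
    (redB_prodB_comp (fun i : {β : Ordinal // β < lam} => iterJump Γ E i.1) he (fun i => m i.1)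
      fun i => (equivalence_iterJump hE i.1).refl _)
  show RedB _ (iterJump Γ E (Order.succ (Order.succ d.1)))
  rw [iterJump_succ]
  exact redB_jumpB ((redB_sumB_iterJump_of_lt
    (Subtype.val_injective.comp Subtype.val_injective) fun j => Order.lt_succ_of_le j.2).trans
    (redB_iterJumpSum_iterJump hE htwo _))

theorem redB_prodB_iterJump_of_isSuccLimit [Infinite Γ] (hE : Equivalence E.rel)
    (htwo : ∃ a b, ¬ E.rel a b) {lam : Ordinal} (hlim : Order.IsSuccLimit lam)
    (hcount : lam.card ≤ Cardinal.aleph0) :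
    RedB (prodB fun i : {β : Ordinal // β < lam} => iterJump Γ E i.1) (iterJump Γ E lam) := by
  have : Countable (Set.Iio lam) := Cardinal.mk_le_aleph0_iff.mp
    ((Cardinal.mk_Iio_ordinal lam).trans_le (Cardinal.lift_le_aleph0.mpr hcount))
  obtain ⟨f, hf⟩ := exists_injective_nat (Set.Iio lam)
  obtain ⟨m, -, -⟩ := exists_not_rel_iterJump (Γ := Γ) htwo 0
  have h1 : (1 : Ordinal) < lam := by simpa using hlim.succ_lt hlim.pos
  rw [iterJump_limit Γ E hlim]
  exact redB_prodB_jumpB_sumB _ ((Infinite.natEmbedding Γ).injective.comp hf)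
    (i₀ := ⟨0, hlim.pos⟩) (i₁ := ⟨1, h1⟩) (fun h => zero_ne_one (congrArg Subtype.val h)) m
    ((equivalence_iterJump hE 0).refl m)

end IterJump

theorem iterJump_limit_bireducible_prod_general
    (Γ : Type) [Group Γ] [Infinite Γ]
    (hdcc : ¬ ∃ H : ℕ → Subgroup Γ, ∀ n, H (n + 1) < H n)
    (E : BorelEqvRel)
    (hE : Equivalence E.rel) (htwo : ∃ a b : E.carrier, ¬ E.rel a b)
    (lam : Ordinal) (hlim : Order.IsSuccLimit lam) (hcount : lam.card ≤ Cardinal.aleph0) :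
    RedB (iterJump Γ E lam)
        (prodB (fun i : {β : Ordinal // β < lam} => iterJump Γ E i.1)) ∧
      RedB (prodB (fun i : {β : Ordinal // β < lam} => iterJump Γ E i.1))
        (iterJump Γ E lam) := by
  have : WellFoundedLT (Subgroup Γ) :=
    ⟨wellFounded_iff_isEmpty_descending_chain.mpr ⟨fun ⟨H, hH⟩ => hdcc ⟨H, hH⟩⟩⟩
  exact ⟨redB_iterJump_prodB_of_isSuccLimit hE htwo hlim,
    redB_prodB_iterJump_of_isSuccLimit hE htwo hlim hcount⟩

/-- Let `Γ` be a countably infinite group satisfying the descending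
chain condition, `E` an equivalence relation on a standard Borel space with at least
two classes, and `λ` a countable limit ordinal.  Then `J^λ_Γ(E)` is Borel bireducible
with the countable product `∏_{α<λ} J^α_Γ(E)`. -/
theorem iterJump_limit_bireducible_prod
    (Γ : Type) [Group Γ] [Countable Γ] [Infinite Γ]
    (hdcc : ¬ ∃ H : ℕ → Subgroup Γ, ∀ n, H (n + 1) < H n)
    (E : BorelEqvRel) (hsb : @StandardBorelSpace E.carrier E.ms)
    (hE : Equivalence E.rel) (htwo : ∃ a b : E.carrier, ¬ E.rel a b)
    (lam : Ordinal) (hlim : Order.IsSuccLimit lam) (hcount : lam.card ≤ Cardinal.aleph0) :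
    RedB (iterJump Γ E lam)
        (prodB (fun i : {β : Ordinal // β < lam} => iterJump Γ E i.1)) ∧
      RedB (prodB (fun i : {β : Ordinal // β < lam} => iterJump Γ E i.1))
        (iterJump Γ E lam) :=
  iterJump_limit_bireducible_prod_general Γ hdcc E hE htwo lam hlim hcount
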